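/- There exists a probability measure μ on the measurable space (ℕ, P(ℕ)) (where P(ℕ) is the σ-algebra of all subsets of ℕ) such that (ℕ, P(ℕ), μ) is conditionally partitionable: there exists a sequence (b_n)_{n∈ℕ} of strictly positive real numbers such that for every sequence (a_n)_{n∈ℕ} of nonnegative real numbers with a_n ≤ b_n for all n, there exists a sequence (A_n)_{n∈ℕ} of pairwise disjoint subsets of ℕ with μ(A_n) = a_n for all n. -/

import Mathlib

/-!
Let `ν` be the geometric distribution of parameter `1/2` on `ℕ`, so `ν {k} = 2^-(k+1)`, and
transport `ν ⊗ ν` to `ℕ` along a bijection `ℕ × ℕ ≃ ℕ`. By binary expansion, every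
`t ∈ [0, 1]` is `ν S` for some `S ⊆ ℕ`. Hence with `b n = ν {n}` the row `{n} × ℕ` contains a
set of any measure `a n ≤ b n`, namely `{n} × S` with `ν S = a n / b n`, and distinct rows are
disjoint.
-/

open MeasureTheory

/-- A measure space is conditionally partitionable if there is a sequence of strictly
positive reals `b` such that every sequence of nonnegative reals dominated by `b` is
attained as the measures of a sequence of pairwise disjoint measurable sets. -/
def CondPartitionable {Ω : Type*} [MeasurableSpace Ω] (μ : Measure Ω) : Prop :=
  ∃ b : ℕ → ℝ, (∀ n, 0 < b n) ∧
    ∀ a : ℕ → ℝ, (∀ n, 0 ≤ a n) → (∀ n, a n ≤ b n) → ∃ A : ℕ → Set Ω,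
      (∀ n, MeasurableSet (A n)) ∧ (∀ m n, m ≠ n → Disjoint (A m) (A n)) ∧
      ∀ n, μ (A n) = ENNReal.ofReal (a n)

open ProbabilityTheory Function
open scoped ENNReal

theorem CondPartitionable.map {Ω Ω' : Type*} [MeasurableSpace Ω] [MeasurableSpace Ω']
    {μ : Measure Ω} (h : CondPartitionable μ) {f : Ω → Ω'} (hf : MeasurableEmbedding f) :
    CondPartitionable (μ.map f) := by
  obtain ⟨b, hb, hpart⟩ := h
  refine ⟨b, hb, fun a ha hab => ?_⟩
  obtain ⟨A, hA, hdisj, hμA⟩ := hpart a ha hab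
  refine ⟨fun n => f '' A n, fun n => hf.measurableSet_image.2 (hA n),
    fun m n hmn => (Set.disjoint_image_iff hf.injective).2 (hdisj m n hmn), fun n => ?_⟩
  rw [hf.map_apply, Set.preimage_image_eq _ hf.injective, hμA]

theorem condPartitionable_prod {α Ω : Type*} [MeasurableSpace α] [MeasurableSpace Ω]
    {ρ : Measure α} {ν : Measure Ω} [SFinite ν] {E : ℕ → Set α}
    (hE : ∀ n, MeasurableSet (E n)) (hE_disj : Pairwise (Disjoint on E))
    (hρE_ne_zero : ∀ n, ρ (E n) ≠ 0) (hρE_ne_top : ∀ n, ρ (E n) ≠ ∞)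
    (hν : ∀ t ≤ 1, ∃ S, MeasurableSet S ∧ ν S = t) :
    CondPartitionable (ρ.prod ν) := by
  have hb : ∀ n, 0 < (ρ (E n)).toReal :=
    fun n => ENNReal.toReal_pos (hρE_ne_zero n) (hρE_ne_top n)
  refine ⟨fun n => (ρ (E n)).toReal, hb, fun a ha hab => ?_⟩
  choose S hS hνS using fun n => hν (ENNReal.ofReal (a n / (ρ (E n)).toReal))
    (ENNReal.ofReal_le_one.2 ((div_le_one (hb n)).2 (hab n)))
  refine ⟨fun n => E n ×ˢ S n, fun n => (hE n).prod (hS n),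
    fun m n hmn => Set.disjoint_prod.2 (Or.inl (hE_disj hmn)), fun n => ?_⟩
  rw [Measure.prod_prod, hνS]
  nth_rw 1 [← ENNReal.ofReal_toReal (hρE_ne_top n)]
  rw [← ENNReal.ofReal_mul ENNReal.toReal_nonneg, mul_div_cancel₀ _ (hb n).ne']

theorem geometricMeasure_singleton_ne_zero {p : unitInterval} (hp₀ : p ≠ 0) (hp₁ : p ≠ 1)
    (n : ℕ) : geometricMeasure p {n} ≠ 0 := by
  rw [geometricMeasure_singleton hp₀]
  exact (ENNReal.ofReal_pos.2 (geometricMeasure_pos hp₀ hp₁ n)).ne'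

theorem exists_geometricMeasure_eq {p : unitInterval} (hp : (p : ℝ) = 2⁻¹) {t : ℝ≥0∞}
    (ht : t ≤ 1) : ∃ S : Set ℕ, geometricMeasure p S = t := by
  have hp₀ : p ≠ 0 := fun h => by norm_num [h] at hp
  have ht_mem : t.toReal ∈ Set.Icc 0 1 :=
    ⟨ENNReal.toReal_nonneg, ENNReal.toReal_le_of_le_ofReal zero_le_one (by simpa using ht)⟩
  obtain ⟨d, -, hd⟩ := Real.ofDigits_SurjOn one_lt_two ht_mem
  refine ⟨{i | d i = 1}, ?_⟩
  rw [← Measure.tsum_indicator_apply_singleton _ _ .of_discrete,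
    ← ENNReal.ofReal_toReal (ht.trans_lt ENNReal.one_lt_top).ne, ← hd, Real.ofDigits,
    ENNReal.ofReal_tsum_of_nonneg (fun _ => Real.ofDigitsTerm_nonneg) Real.summable_ofDigitsTerm]
  refine tsum_congr fun i => ?_
  obtain h | h := Fin.exists_fin_two.mp ⟨d i, rfl⟩
  · simp [h, Real.ofDigitsTerm]
  · have hterm : (1 - (p : ℝ)) ^ i * p = ((2 : ℝ) ^ (i + 1))⁻¹ := by
      rw [hp, pow_succ, mul_inv, ← inv_pow]; norm_num
    simp [h, Real.ofDigitsTerm, geometricMeasure_singleton hp₀, hterm]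

theorem exists_condPartitionable_probability_measure_on_nat :
    ∃ μ : Measure ℕ, IsProbabilityMeasure μ ∧ CondPartitionable μ := by
  let p : unitInterval := ⟨2⁻¹, by norm_num, by norm_num⟩
  have hp₀ : p ≠ 0 := fun h => by norm_num [p, Subtype.ext_iff] at h
  have hp₁ : p ≠ 1 := fun h => by norm_num [p, Subtype.ext_iff] at h
  let ν := geometricMeasure p
  have hpair : MeasurableEmbedding Nat.pairEquiv :=
    ⟨Nat.pairEquiv.injective, measurable_of_countable _, fun _ _ => .of_discrete⟩
  refine ⟨(ν.prod ν).map Nat.pairEquiv,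
    Measure.isProbabilityMeasure_map hpair.measurable.aemeasurable, .map ?_ hpair⟩
  refine condPartitionable_prod (E := fun n => {n}) (fun _ => .of_discrete)
    (fun _ _ hmn => Set.disjoint_singleton.2 hmn) (geometricMeasure_singleton_ne_zero hp₀ hp₁)
    (fun _ => measure_ne_top _ _) fun t ht => ?_
  obtain ⟨S, hS⟩ := exists_geometricMeasure_eq (p := p) rfl ht
  exact ⟨S, .of_discrete, hS⟩
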